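/- arXiv:2308.09344 — 5 statements merged into one kernel-verified Lean document; each statement's English description precedes it below -/
import Mathlib

section
/- For every permutation x in S_n, applying West's stack-sorting map s at most n-1 times yields the identity permutation. -/
/-- `isoOrd p q` : `q` is order-isomorphic to `p`. -/
def isoOrd (p q : List ℕ) : Bool :=
  (p.length == q.length) &&
    (List.range p.length).all fun i =>
      (List.range p.length).all fun j =>
        decide ((p.getD i 0 < p.getD j 0) ↔ (q.getD i 0 < q.getD j 0))

/-- `containsPat p w` : the word `w` contains an occurrence of the classical pattern `p`. -/
def containsPat (p w : List ℕ) : Bool :=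
  (w.sublistsLen p.length).any (isoOrd p)

/-- Pop phase of the right-greedy `T`-avoiding stack: with next input `a`,
pop entries from the top of the stack while pushing `a` would create a pattern of `T`
(read from top to bottom).  Returns the remaining stack and the popped entries in output order. -/
def popPhase (T : List (List ℕ)) (a : ℕ) : List ℕ → List ℕ × List ℕ
  | [] => ([], [])
  | b :: s =>
    if T.any (fun p => containsPat p (a :: b :: s)) then
      let r := popPhase T a s
      (r.1, b :: r.2)
    else (b :: s, [])

/-- Main loop of the right-greedy `T`-avoiding stack map. -/
def stkAux (T : List (List ℕ)) : List ℕ → List ℕ → List ℕ → List ℕ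
  | [], stack, out => out ++ stack
  | a :: rest, stack, out =>
    let r := popPhase T a stack
    stkAux T rest (a :: r.1) (out ++ r.2)

/-- The generalized stack-sorting map `s_T` : the input is pushed right-greedily through a
stack which must avoid (read from top to bottom) every pattern in `T`. -/
def sT (T : List (List ℕ)) (x : List ℕ) : List ℕ := stkAux T x [] []

/-- West's stack-sorting map: the stack must be increasing from top to bottom,
i.e. must avoid `21` read from top to bottom. -/
def westSort (x : List ℕ) : List ℕ := sT [[2,1]] x

/-- `x` is a permutation of `{1,…,n}`, written as a list. -/
def IsPermList (n : ℕ) (x : List ℕ) : Prop := x.Perm (List.range' 1 n)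

/-- The identity permutation `1 2 … n`. -/
def idPerm (n : ℕ) : List ℕ := List.range' 1 n

/-- `x` contains the bivincular pattern `132*` : positions `i < j` (0-based) with
`x i < x (j+1)` and `x j = x (j+1) + 1`. -/
def Has132Star (x : List ℕ) : Prop :=
  ∃ i j, i < j ∧ j + 1 < x.length ∧ x.getD i 0 < x.getD (j+1) 0 ∧
    x.getD j 0 = x.getD (j+1) 0 + 1

/-- `x` contains the bivincular pattern `123*` : positions `i < j` (0-based) with
`x i < x j` and `x (j+1) = x j + 1`. -/
def Has123Star (x : List ℕ) : Prop :=
  ∃ i j, i < j ∧ j + 1 < x.length ∧ x.getD i 0 < x.getD j 0 ∧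
    x.getD (j+1) 0 = x.getD j 0 + 1

/-- Boolean version of `Has132Star`. -/
def has132star (x : List ℕ) : Bool :=
  (List.range x.length).any fun j =>
    decide (j + 1 < x.length) && (x.getD j 0 == x.getD (j+1) 0 + 1) &&
      (List.range j).any fun i => decide (x.getD i 0 < x.getD (j+1) 0)

/-- Boolean version of `Has123Star`. -/
def has123star (x : List ℕ) : Bool :=
  (List.range x.length).any fun j =>
    decide (j + 1 < x.length) && (x.getD (j+1) 0 == x.getD j 0 + 1) &&
      (List.range j).any fun i => decide (x.getD i 0 < x.getD j 0)

/-!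
West's map satisfies `s(L n R) = s(L) s(R) n` for the largest entry `n`. Hence `s` leaves alone
an increasing tail `k+1, …, n` whose entries exceed everything before it, and it moves the
largest remaining entry `k` to the front of that tail. So after `j` passes the last `j` entries
are `n-j+1, …, n`, and after `n-1` passes the permutation is sorted.
-/

lemma List.takeWhile_append_singleton_of_neg {α : Type*} {p : α → Bool} {x : α}
    (hx : p x = false) (l : List α) : (l ++ [x]).takeWhile p = l.takeWhile p := by
  induction l with
  | nil => simp [hx]
  | cons b l ih => by_cases hb : p b <;> simp [hb, ih]

lemma List.dropWhile_append_singleton_of_neg {α : Type*} {p : α → Bool} {x : α}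
    (hx : p x = false) (l : List α) : (l ++ [x]).dropWhile p = l.dropWhile p ++ [x] := by
  induction l with
  | nil => simp [hx]
  | cons b l ih => by_cases hb : p b <;> simp [hb, ih]

/-- The output of West's stack on input `w` from the initial stack `st` (top first); it agrees
with `stkAux [[2,1]]` as long as the stack increases from top to bottom (`stkAux_two_one`). -/
def westRun : List ℕ → List ℕ → List ℕ
  | [], st => st
  | a :: w, st => st.takeWhile (· < a) ++ westRun w (a :: st.dropWhile (· < a))

lemma isoOrd_two_one (u v : ℕ) : isoOrd [2,1] [u,v] = decide (v < u) := by
  rcases lt_or_ge v u with h | h <;> simp [isoOrd, List.range_succ, h, h.not_gt]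

lemma containsPat_two_one_iff (w : List ℕ) :
    containsPat [2,1] w = true ↔ ¬ w.Pairwise (· ≤ ·) := by
  simp only [containsPat, List.any_eq_true, List.mem_sublistsLen,
    List.pairwise_iff_forall_sublist, not_forall, not_le]
  constructor
  · rintro ⟨q, ⟨hsub, hlen⟩, hiso⟩
    match q, hlen with
    | [u, v], _ => exact ⟨u, v, hsub, by simpa [isoOrd_two_one] using hiso⟩
  · rintro ⟨u, v, hsub, hvu⟩
    exact ⟨[u, v], ⟨hsub, rfl⟩, by simpa [isoOrd_two_one] using hvu⟩

lemma pairwise_cons_iff_le_head {α : Type*} [Preorder α] {a b : α} {s : List α}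
    (hs : (b :: s).Pairwise (· ≤ ·)) : (a :: b :: s).Pairwise (· ≤ ·) ↔ a ≤ b := by
  refine ⟨fun h => List.rel_of_pairwise_cons h List.mem_cons_self, fun hab => ?_⟩
  refine hs.cons fun c hc => ?_
  rcases List.mem_cons.mp hc with rfl | hc
  · exact hab
  · exact hab.trans (List.rel_of_pairwise_cons hs hc)

lemma popPhase_two_one (a : ℕ) {s : List ℕ} (hs : s.Pairwise (· ≤ ·)) :
    popPhase [[2,1]] a s = (s.dropWhile (· < a), s.takeWhile (· < a)) := by
  induction s with
  | nil => rfl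
  | cons b s ih =>
    have hcond : containsPat [2,1] (a :: b :: s) = decide (b < a) := by
      rw [Bool.eq_iff_iff, containsPat_two_one_iff, pairwise_cons_iff_le_head hs]
      simp
    by_cases hba : b < a <;> simp [popPhase, hcond, hba, ih hs.of_cons]

lemma pairwise_cons_dropWhile_lt {α : Type*} [LinearOrder α] (a : α) {s : List α} (hs : s.Pairwise (· ≤ ·)) :
    (a :: s.dropWhile (· < a)).Pairwise (· ≤ ·) := by
  induction s with
  | nil => exact List.pairwise_singleton _ a
  | cons b s ih =>
    by_cases hba : b < a
    · simpa [hba] using ih hs.of_cons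
    · simpa [hba, pairwise_cons_iff_le_head hs] using not_lt.mp hba

lemma stkAux_two_one (w : List ℕ) {st : List ℕ} (hst : st.Pairwise (· ≤ ·)) (out : List ℕ) :
    stkAux [[2,1]] w st out = out ++ westRun w st := by
  induction w generalizing st out with
  | nil => rfl
  | cons a w ih =>
    simp [stkAux, westRun, popPhase_two_one a hst, ih (pairwise_cons_dropWhile_lt a hst)]

lemma westSort_eq_westRun (x : List ℕ) : westSort x = westRun x [] :=
  stkAux_two_one x .nil []

lemma westRun_perm (w st : List ℕ) : (westRun w st).Perm (st ++ w) := by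
  induction w generalizing st with
  | nil => simp [westRun]
  | cons a w ih =>
    refine ((ih _).append_left _).trans ?_
    conv_rhs => rw [← List.takeWhile_append_dropWhile (p := (· < a)) (l := st)]
    rw [List.append_assoc]
    exact List.perm_middle.symm.append_left _

lemma westRun_append_bottom {M : ℕ} {w : List ℕ} (hw : ∀ e ∈ w, e < M) (st : List ℕ) :
    westRun w (st ++ [M]) = westRun w st ++ [M] := by
  induction w generalizing st with
  | nil => rfl
  | cons a w ih =>
    have hMa : decide (M < a) = false := by simpa using (hw a List.mem_cons_self).le
    rw [westRun, westRun, List.takeWhile_append_singleton_of_neg (p := (· < a)) hMa,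
      List.dropWhile_append_singleton_of_neg (p := (· < a)) hMa, ← List.cons_append,
      ih fun e he => hw e (List.mem_cons_of_mem a he), List.append_assoc]

lemma westRun_append_max_cons {M : ℕ} {L R st : List ℕ} (hst : ∀ e ∈ st, e < M)
    (hL : ∀ e ∈ L, e < M) (hR : ∀ e ∈ R, e < M) :
    westRun (L ++ M :: R) st = westRun L st ++ westRun R [] ++ [M] := by
  induction L generalizing st with
  | nil =>
    have htake : st.takeWhile (· < M) = st := List.takeWhile_eq_self_iff.mpr (by simpa using hst)
    have hdrop : st.dropWhile (· < M) = [] := List.dropWhile_eq_nil_iff.mpr (by simpa using hst)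
    simp only [List.nil_append, westRun, htake, hdrop, List.append_assoc]
    simpa using westRun_append_bottom hR []
  | cons a L ih =>
    have hst' : ∀ e ∈ a :: st.dropWhile (· < a), e < M := by
      rintro e (_ | ⟨_, he⟩)
      · exact hL a List.mem_cons_self
      · exact hst e ((List.dropWhile_sublist _).subset he)
    rw [List.cons_append, westRun, westRun, ih hst' fun e he => hL e (List.mem_cons_of_mem a he)]
    simp only [List.append_assoc]

theorem westSort_append_max_cons {M : ℕ} {L R : List ℕ} (hL : ∀ e ∈ L, e < M)
    (hR : ∀ e ∈ R, e < M) : westSort (L ++ M :: R) = westSort L ++ westSort R ++ [M] := by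
  simp only [westSort_eq_westRun]
  exact westRun_append_max_cons (by simp) hL hR

lemma westSort_perm (x : List ℕ) : (westSort x).Perm x := by
  simpa [westSort_eq_westRun] using westRun_perm x []

lemma westSort_append_range' {s : ℕ} {y : List ℕ} (hy : ∀ e ∈ y, e < s) (k : ℕ) :
    westSort (y ++ List.range' s k) = westSort y ++ List.range' s k := by
  induction k with
  | zero => simp
  | succ k ih =>
    have hlt : ∀ e ∈ y ++ List.range' s k, e < s + 1 * k := by
      intro e he
      rcases List.mem_append.mp he with he | he
      · exact (hy e he).trans_le (by omega)
      · have := List.mem_range'_1.mp he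
        omega
    rw [List.range'_concat, ← List.append_assoc, westSort_append_max_cons hlt (by simp), ih]
    simp [westSort_eq_westRun, westRun]

lemma exists_westSort_append_range' {m : ℕ} {y : List ℕ} (hy : y.Perm (List.range' 1 (m + 1)))
    (k : ℕ) : ∃ z, z.Perm (List.range' 1 m) ∧
      westSort (y ++ List.range' (m + 2) k) = z ++ List.range' (m + 1) (k + 1) := by
  obtain ⟨L, R, rfl⟩ := List.append_of_mem (hy.mem_iff.mpr (List.mem_range'_1.mpr
    (by omega : 1 ≤ m + 1 ∧ m + 1 < 1 + (m + 1))))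
  have hLR : (L ++ R).Perm (List.range' 1 m) := by
    rw [← List.perm_cons (m + 1)]
    refine List.perm_middle.symm.trans (hy.trans ?_)
    simp [List.range'_concat, Nat.add_comm]
  have hlt : ∀ e ∈ L ++ R, e < m + 1 := fun e he => by
    have := List.mem_range'_1.mp (hLR.subset he)
    omega
  have hy_lt : ∀ e ∈ L ++ (m + 1) :: R, e < m + 2 := fun e he => by
    have := List.mem_range'_1.mp (hy.subset he)
    omega
  refine ⟨westSort L ++ westSort R, ((westSort_perm L).append (westSort_perm R)).trans hLR, ?_⟩
  rw [westSort_append_range' hy_lt, westSort_append_max_cons (fun e he => hlt e (by simp [he]))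
    (fun e he => hlt e (by simp [he])), List.range'_succ]
  simp

lemma westSort_iterate_append_range' {m : ℕ} {y : List ℕ} (hy : y.Perm (List.range' 1 (m + 1)))
    (k : ℕ) : westSort^[m] (y ++ List.range' (m + 2) k) = List.range' 1 (m + 1 + k) := by
  induction m generalizing y k with
  | zero =>
    rw [List.perm_singleton.mp hy]
    simp [List.range'_succ, Nat.add_comm]
  | succ m ih =>
    obtain ⟨z, hz, hstep⟩ := exists_westSort_append_range' hy k
    rw [Function.iterate_succ_apply, hstep, ih hz]
    congr 1
    omega

/-- Applying West's stack-sorting map `n - 1` times to any permutation of length `n`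
yields the identity permutation. -/
theorem west_iterate_sorts (n : ℕ) (x : List ℕ) (hx : IsPermList n x) :
    westSort^[n-1] x = idPerm n := by
  cases n with
  | zero => simpa [IsPermList, idPerm] using hx
  | succ m => simpa [idPerm] using westSort_iterate_append_range' hx 0
end

section
/- If x_i is a left-to-right minimum of x and x_i appears to the left of x_j in s_{132,321}(x), then j < i. -/
/-!
When the left-to-right minimum `v = x_i` is pushed, everything still on the stack is larger than
`v`, so after the pops the stack `v, s` (top to bottom) is weakly increasing: a descent below `v`
would form a `132` with `v`. Both forbidden patterns end in a descent, and a weakly increasing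
stack has none, so this stack is never popped again. It is therefore the tail of the output, and
every later entry `x_j` leaves before `x_i`.
-/

namespace StackSorting

lemma exists_descent_of_containsPat {p w : List ℕ} (hp : p.length = 3)
    (hdesc : p.getD 2 0 < p.getD 1 0) (h : containsPat p w) :
    ∃ u b c, [u, b, c].Sublist w ∧ c < b := by
  obtain ⟨q, hq, hiso⟩ := List.any_eq_true.1 h
  obtain ⟨hqw, hlen⟩ := List.mem_sublistsLen.1 hq
  obtain ⟨u, b, c, rfl⟩ := List.length_eq_three.1 (hlen.trans hp)
  simp only [isoOrd, Bool.and_eq_true, List.all_eq_true, List.mem_range, hp,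
    decide_eq_true_eq] at hiso
  exact ⟨u, b, c, hqw, by simpa using (hiso.2 2 (by omega) 1 (by omega)).1 hdesc⟩

lemma containsPat_132_of_sublist {u c d : ℕ} {w : List ℕ} (hs : [u, c, d].Sublist w)
    (hud : u < d) (hdc : d < c) : containsPat [1, 3, 2] w := by
  refine List.any_eq_true.2 ⟨[u, c, d], List.mem_sublistsLen.2 ⟨hs, rfl⟩, ?_⟩
  simp only [isoOrd, Bool.and_eq_true, List.all_eq_true, List.mem_range, List.length_cons,
    List.length_nil]
  refine ⟨rfl, fun k hk l hl => ?_⟩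
  interval_cases k <;> interval_cases l <;> simp <;> omega

lemma containsPat_cons_eq_false {p s : List ℕ} (hp : p.length = 3)
    (hdesc : p.getD 2 0 < p.getD 1 0) (hs : s.Pairwise (· ≤ ·)) (a : ℕ) :
    containsPat p (a :: s) = false := by
  by_contra h
  obtain ⟨u, b, c, hsub, hcb⟩ :=
    exists_descent_of_containsPat hp hdesc (Bool.not_eq_false _ ▸ h)
  have hbc : [b, c].Sublist s := by
    rcases List.sublist_cons_iff.1 hsub with h' | ⟨r, hr, h'⟩
    · exact (List.sublist_cons_self u [b, c]).trans h'
    · cases hr; exact h'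
  exact (List.pairwise_iff_forall_sublist.1 hs hbc).not_gt hcb

lemma popPhase_snd_append_fst (T : List (List ℕ)) (a : ℕ) :
    ∀ s : List ℕ, (popPhase T a s).2 ++ (popPhase T a s).1 = s
  | [] => rfl
  | b :: s => by
    rw [popPhase]
    split
    · simpa using popPhase_snd_append_fst T a s
    · simp

lemma popPhase_snd_prefix (T : List (List ℕ)) (a : ℕ) (s : List ℕ) :
    (popPhase T a s).2 <+: s :=
  ⟨_, popPhase_snd_append_fst T a s⟩

lemma popPhase_fst_suffix (T : List (List ℕ)) (a : ℕ) (s : List ℕ) :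
    (popPhase T a s).1 <:+ s :=
  ⟨_, popPhase_snd_append_fst T a s⟩

variable {T : List (List ℕ)}

lemma suffix_popPhase_fst_append_of_pairwise
    (hT : ∀ p ∈ T, p.length = 3 ∧ p.getD 2 0 < p.getD 1 0) {s : List ℕ}
    (hs : s.Pairwise (· ≤ ·)) (a : ℕ) :
    ∀ s₁ : List ℕ, s <:+ (popPhase T a (s₁ ++ s)).1
  | [] => by
    cases s with
    | nil => exact List.nil_suffix
    | cons b s =>
      have hkeep : T.any (fun p => containsPat p (a :: b :: s)) = false :=
        List.any_eq_false.2 fun p hp => by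
          simp [containsPat_cons_eq_false (hT p hp).1 (hT p hp).2 hs]
      simp [popPhase, hkeep]
  | b :: s₁ => by
    rw [List.cons_append, popPhase]
    split
    · exact suffix_popPhase_fst_append_of_pairwise hT hs a s₁
    · exact List.suffix_append _ _ |>.trans (List.suffix_cons _ _)

lemma pairwise_popPhase_fst_of_forall_lt (h132 : [1, 3, 2] ∈ T) {a : ℕ} :
    ∀ {s : List ℕ}, (∀ b ∈ s, a < b) → (popPhase T a s).1.Pairwise (· ≤ ·)
  | [], _ => by simp [popPhase]
  | b :: s, hs => by
    rw [popPhase]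
    split
    · exact pairwise_popPhase_fst_of_forall_lt h132 fun c hc => hs c (List.mem_cons_of_mem _ hc)
    · rename_i hkeep
      refine List.pairwise_iff_forall_sublist.2 fun {c d} hcd => not_lt.1 fun hdc => hkeep ?_
      have h := containsPat_132_of_sublist (List.cons_sublist_cons.2 hcd)
        (hs d (hcd.subset (by simp))) hdc
      exact List.any_eq_true.2 ⟨_, h132, h⟩

/-- A weakly increasing bottom part `s` of the stack is never popped. -/
lemma stkAux_eq_append_of_pairwise (hT : ∀ p ∈ T, p.length = 3 ∧ p.getD 2 0 < p.getD 1 0)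
    {s : List ℕ} (hs : s.Pairwise (· ≤ ·)) :
    ∀ rest s₁ out : List ℕ, ∃ w, stkAux T rest (s₁ ++ s) out = w ++ s ∧
      w.Perm (out ++ s₁ ++ rest)
  | [], s₁, out => ⟨out ++ s₁, by simp [stkAux], by simp⟩
  | a :: rest, s₁, out => by
    set r := popPhase T a (s₁ ++ s) with hr
    obtain ⟨s₁', hs₁'⟩ := suffix_popPhase_fst_append_of_pairwise hT hs a s₁
    have hsplit : r.2 ++ s₁' = s₁ := by
      have h := popPhase_snd_append_fst T a (s₁ ++ s)
      rw [← hr, ← hs₁', ← List.append_assoc] at h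
      exact List.append_cancel_right h
    obtain ⟨w, hw, hperm⟩ := stkAux_eq_append_of_pairwise hT hs rest (a :: s₁') (out ++ r.2)
    refine ⟨w, by rw [stkAux, ← hr, ← hs₁']; exact hw, hperm.trans ?_⟩
    rw [← hsplit]
    simp only [List.append_assoc, List.cons_append, List.perm_append_left_iff]
    exact List.perm_middle.symm

lemma exists_stkAux_append_eq (T : List (List ℕ)) (l₂ : List ℕ) :
    ∀ l₁ stack out : List ℕ, ∃ stack' out', stkAux T (l₁ ++ l₂) stack out =
      stkAux T l₂ stack' out' ∧ (out' ++ stack').Perm (out ++ stack ++ l₁)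
  | [], stack, out => ⟨stack, out, by simp⟩
  | a :: l₁, stack, out => by
    obtain ⟨stack', out', h, hperm⟩ := exists_stkAux_append_eq T l₂ l₁
      (a :: (popPhase T a stack).1) (out ++ (popPhase T a stack).2)
    refine ⟨stack', out', by rw [List.cons_append, stkAux]; exact h, hperm.trans ?_⟩
    conv_rhs => rw [← popPhase_snd_append_fst T a stack]
    simp only [List.append_assoc, List.cons_append, List.perm_append_left_iff]
    exact List.perm_middle.symm

lemma exists_sT_eq_append_cons (hT : ∀ p ∈ T, p.length = 3 ∧ p.getD 2 0 < p.getD 1 0)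
    (h132 : [1, 3, 2] ∈ T) {pre suf : List ℕ} {v : ℕ} (hv : ∀ b ∈ pre, v < b) :
    ∃ w s, sT T (pre ++ v :: suf) = w ++ v :: s ∧ suf ⊆ w ∧ w ⊆ pre ++ suf := by
  obtain ⟨stack, out, hrun, hperm⟩ := exists_stkAux_append_eq T (v :: suf) pre [] []
  have hout : ∀ b ∈ out, b ∈ pre := fun b hb => by simpa using hperm.subset (by simp [hb])
  have hstack : ∀ b ∈ stack, b ∈ pre := fun b hb => by simpa using hperm.subset (by simp [hb])
  set r := popPhase T v stack
  have hsorted : (v :: r.1).Pairwise (· ≤ ·) :=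
    List.pairwise_cons.2
      ⟨fun b hb => (hv b (hstack b ((popPhase_fst_suffix T v stack).subset hb))).le,
        pairwise_popPhase_fst_of_forall_lt h132 fun b hb => hv b (hstack b hb)⟩
  obtain ⟨w, hw, hwperm⟩ := stkAux_eq_append_of_pairwise hT hsorted suf [] (out ++ r.2)
  refine ⟨w, r.1, by rw [sT, hrun, stkAux]; exact hw,
    fun b hb => hwperm.symm.subset (by simp [hb]), fun b hb => ?_⟩
  simp only [List.append_nil] at hwperm
  rcases List.mem_append.1 (hwperm.subset hb) with hb | hb
  · rcases List.mem_append.1 hb with hb | hb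
    · exact List.mem_append_left _ (hout b hb)
    · exact List.mem_append_left _ (hstack b ((popPhase_snd_prefix T v stack).subset hb))
  · exact List.mem_append_right _ hb

end StackSorting

lemma List.idxOf_lt_idxOf_append_cons {α : Type*} [BEq α] [LawfulBEq α] {u v : α}
    {w s : List α} (hu : u ∈ w) (hv : v ∉ w) :
    (w ++ v :: s).idxOf u < (w ++ v :: s).idxOf v := by
  rw [List.idxOf_append_of_mem hu, List.idxOf_append_of_notMem hv]
  exact (List.idxOf_lt_length_iff.2 hu).trans_le (Nat.le_add_right _ _)

open StackSorting in
theorem ltr_min_exits_last_general (n : ℕ) (x : List ℕ) (hx : IsPermList n x)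
    (i j : ℕ) (hj : j < x.length)
    (hmin : ∀ k < i, x.getD i 0 < x.getD k 0)
    (hleft : (sT [[1,3,2],[3,2,1]] x).idxOf (x.getD i 0) <
      (sT [[1,3,2],[3,2,1]] x).idxOf (x.getD j 0)) :
    j < i := by
  by_contra! hij
  have hi : i < x.length := hij.trans_lt hj
  have hsplit : x = x.take i ++ x[i] :: x.drop (i + 1) := by
    rw [List.getElem_cons_drop, List.take_append_drop]
  have hv : ∀ b ∈ x.take i, x[i] < b := fun b hb => by
    obtain ⟨k, hk, rfl⟩ := List.mem_take_iff_getElem.1 hb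
    have h := hmin k (by omega)
    rwa [List.getD_eq_getElem _ _ hi, List.getD_eq_getElem _ _ (by omega)] at h
  obtain ⟨w, s, hsT, hsuf, hw⟩ :=
    exists_sT_eq_append_cons (T := [[1,3,2],[3,2,1]]) (by decide) (by decide)
      (suf := x.drop (i + 1)) hv
  rw [← hsplit] at hsT
  rw [List.getD_eq_getElem _ _ hi, List.getD_eq_getElem _ _ hj, hsT] at hleft
  have hij_lt : i < j := hij.lt_of_ne fun h => by subst h; exact lt_irrefl _ hleft
  have hu : x[j] ∈ w := hsuf (List.mem_drop_iff_getElem.2 ⟨j - (i + 1), by omega, by grind⟩)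
  have hnd : (x[i] :: (x.take i ++ x.drop (i + 1))).Nodup := by
    rw [← List.nodup_middle, ← hsplit]
    exact hx.nodup_iff.2 List.nodup_range'
  have hv_notMem : x[i] ∉ w := fun h => (List.nodup_cons.1 hnd).1 (hw h)
  exact (List.idxOf_lt_idxOf_append_cons hu hv_notMem).asymm hleft

/-- If `x i` is a left-to-right minimum of `x` and `x i` appears to the left of `x j`
in `s_{132,321}(x)`, then `j < i`  (indices `0`-based). -/
theorem ltr_min_exits_last (n : ℕ) (x : List ℕ) (hx : IsPermList n x)
    (i j : ℕ) (hi : i < x.length) (hj : j < x.length)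
    (hmin : ∀ k < i, x.getD i 0 < x.getD k 0)
    (hleft : (sT [[1,3,2],[3,2,1]] x).idxOf (x.getD i 0) <
      (sT [[1,3,2],[3,2,1]] x).idxOf (x.getD j 0)) :
    j < i :=
  ltr_min_exits_last_general n x hx i j hj hmin hleft
end

section
/- If x is sorted by the (132,321)-machine (i.e., s(s_{132,321}(x)) is the identity), then x avoids the pattern 123. -/
/-!
Let `u < v < a` occur in this order in `x`. In the `(132,321)`-stack the minimum of everything
read so far lies in the stack on top of an increasing run, and an incoming entry never pops it,
since an entry followed by an increasing run contains neither `132` nor `321` (both end in a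
descent). So when `v` is pushed it lies above an entry `≤ u`, and when `a` arrives, `v` has
already been popped or is popped now (an entry `z` below it completes `a v z ≅ 321`), while the
current minimum `m < v` stays below `a`. Hence `s_{132,321}(x)` contains the `231` occurrence
`v a m`. Finally West's map sends any `231` occurrence `b c d` to a word with `b` before `d`,
because `c` pops `b` before `d` is read.
-/

open scoped List

lemma containsPat_iff {p w : List ℕ} :
    containsPat p w = true ↔ ∃ o, o <+ w ∧ isoOrd p o = true := by
  simp only [containsPat, List.any_eq_true, List.mem_sublistsLen]
  refine ⟨fun ⟨o, ⟨hs, _⟩, hi⟩ => ⟨o, hs, hi⟩, fun ⟨o, hs, hi⟩ => ⟨o, ⟨hs, ?_⟩, hi⟩⟩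
  simp only [isoOrd, Bool.and_eq_true, beq_iff_eq] at hi
  exact hi.1.symm

lemma isoOrd_21_iff {a b : ℕ} : isoOrd [2,1] [a, b] = true ↔ b < a := by
  simp [isoOrd, List.range_succ]; omega

lemma isoOrd_123_iff {a b c : ℕ} : isoOrd [1,2,3] [a, b, c] = true ↔ a < b ∧ b < c := by
  simp [isoOrd, List.range_succ]; omega

lemma isoOrd_132_iff {a b c : ℕ} : isoOrd [1,3,2] [a, b, c] = true ↔ a < c ∧ c < b := by
  simp [isoOrd, List.range_succ]; omega

lemma isoOrd_321_iff {a b c : ℕ} : isoOrd [3,2,1] [a, b, c] = true ↔ c < b ∧ b < a := by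
  simp [isoOrd, List.range_succ]; omega

lemma containsPat_three_iff {p w : List ℕ} (hp : p.length = 3) :
    containsPat p w = true ↔ ∃ a b c, [a, b, c] <+ w ∧ isoOrd p [a, b, c] = true := by
  rw [containsPat_iff]
  refine ⟨fun ⟨o, hs, hi⟩ => ?_, fun ⟨a, b, c, hs, hi⟩ => ⟨_, hs, hi⟩⟩
  have ho : o.length = 3 := by
    simp only [isoOrd, Bool.and_eq_true, beq_iff_eq] at hi
    omega
  obtain ⟨a, b, c, rfl⟩ := List.length_eq_three.1 ho
  exact ⟨a, b, c, hs, hi⟩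

lemma exists_split_of_triple_sublist {u v a : ℕ} {x : List ℕ} (h : [u, v, a] <+ x) :
    ∃ p q, x = p ++ v :: q ∧ u ∈ p ∧ a ∈ q := by
  obtain ⟨A, B, rfl, hu, hva⟩ := List.cons_sublist_iff.1 h
  obtain ⟨C, D, rfl, hv, ha⟩ := List.cons_sublist_iff.1 hva
  obtain ⟨C₁, C₂, rfl⟩ := List.append_of_mem hv
  exact ⟨A ++ C₁, C₂ ++ D, by simp, by simp [hu], by simp [List.singleton_sublist.1 ha]⟩

def containsAny (T : List (List ℕ)) (w : List ℕ) : Bool :=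
  T.any fun p => containsPat p w

lemma containsAny_132_321_iff {w : List ℕ} :
    containsAny [[1,3,2],[3,2,1]] w = true ↔
      ∃ a b c, [a, b, c] <+ w ∧ ((a < c ∧ c < b) ∨ (c < b ∧ b < a)) := by
  simp only [containsAny, List.any_cons, List.any_nil, Bool.or_false, Bool.or_eq_true,
    containsPat_three_iff (p := [1,3,2]) rfl, containsPat_three_iff (p := [3,2,1]) rfl,
    isoOrd_132_iff, isoOrd_321_iff, ← exists_or, and_or_left]

lemma containsAny_132_321_cons_eq_false {a : ℕ} {s : List ℕ} (hs : s.Pairwise (· ≤ ·)) :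
    containsAny [[1,3,2],[3,2,1]] (a :: s) = false := by
  rw [Bool.eq_false_iff, ne_eq, containsAny_132_321_iff]
  rintro ⟨_, b, c, hsub, hbc⟩
  have : b ≤ c := List.pairwise_pair.1 (hs.sublist hsub.tail)
  omega

lemma containsAny_of_sublist {T : List (List ℕ)} {w w' : List ℕ} (hw : w <+ w')
    (h : containsAny T w = true) : containsAny T w' = true := by
  simp only [containsAny, List.any_eq_true, containsPat_iff] at h ⊢
  obtain ⟨p, hp, o, ho, hi⟩ := h
  exact ⟨p, hp, o, ho.trans hw, hi⟩

lemma popPhase_cons (T : List (List ℕ)) (a b : ℕ) (s : List ℕ) :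
    popPhase T a (b :: s) =
      if containsAny T (a :: b :: s) then
        ((popPhase T a s).1, b :: (popPhase T a s).2)
      else (b :: s, []) :=
  rfl

lemma popPhase_snd_append_fst (T : List (List ℕ)) (a : ℕ) (s : List ℕ) :
    (popPhase T a s).2 ++ (popPhase T a s).1 = s := by
  induction s with
  | nil => rfl
  | cons b t ih =>
    rw [popPhase_cons]
    split <;> simp [ih]

lemma popPhase_fst_eq_nil_or_not_containsAny (T : List (List ℕ)) (a : ℕ) (s : List ℕ) :
    (popPhase T a s).1 = [] ∨ containsAny T (a :: (popPhase T a s).1) = false := by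
  induction s with
  | nil => exact Or.inl rfl
  | cons b t ih =>
    rw [popPhase_cons]
    split
    next => exact ih
    next h => exact Or.inr (by simpa using h)

lemma exists_popPhase_fst_eq_append {T : List (List ℕ)} {a : ℕ} {s : List ℕ}
    (hs : containsAny T (a :: s) = false) (l : List ℕ) :
    ∃ t, (popPhase T a (l ++ s)).1 = t ++ s := by
  induction l with
  | nil =>
    cases s with
    | nil => exact ⟨[], rfl⟩
    | cons b s => exact ⟨[], by rw [List.nil_append, popPhase_cons, if_neg (by simp [hs])]⟩
  | cons b l ih =>
    rw [List.cons_append, popPhase_cons]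
    split
    · exact ih
    · exact ⟨b :: l, rfl⟩

lemma mem_popPhase_snd {T : List (List ℕ)} {a v : ℕ} {l₂ : List ℕ}
    (h : containsAny T (a :: v :: l₂) = true) (l₁ : List ℕ) :
    v ∈ (popPhase T a (l₁ ++ v :: l₂)).2 := by
  induction l₁ with
  | nil => simp [popPhase_cons, h]
  | cons b l ih =>
    rw [List.cons_append, popPhase_cons, if_pos (containsAny_of_sublist (by simp) h)]
    exact List.mem_cons_of_mem b ih

/-- A configuration of a stack machine; the stack is listed from the top. -/
structure StackState where
  stack : List ℕ
  out : List ℕ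

/-- What the machine outputs if the input ends now. -/
def StackState.word (st : StackState) : List ℕ := st.out ++ st.stack

def stkStep (T : List (List ℕ)) (st : StackState) (a : ℕ) : StackState :=
  ⟨a :: (popPhase T a st.stack).1, st.out ++ (popPhase T a st.stack).2⟩

def stkRun (T : List (List ℕ)) (q : List ℕ) (st : StackState) : StackState :=
  q.foldl (stkStep T) st

section StackMachine

variable {T : List (List ℕ)}

lemma stkAux_eq_word_stkRun (q stack out : List ℕ) :
    stkAux T q stack out = (stkRun T q ⟨stack, out⟩).word := by
  induction q generalizing stack out with
  | nil => rfl
  | cons a q ih => exact ih _ _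

lemma sT_eq_word_stkRun (x : List ℕ) : sT T x = (stkRun T x ⟨[], []⟩).word :=
  stkAux_eq_word_stkRun x [] []

lemma stkRun_append (p q : List ℕ) (st : StackState) :
    stkRun T (p ++ q) st = stkRun T q (stkRun T p st) :=
  List.foldl_append

lemma stkRun_cons (a : ℕ) (q : List ℕ) (st : StackState) :
    stkRun T (a :: q) st = stkRun T q (stkStep T st a) :=
  rfl

lemma stkRun_induction {P : StackState → Prop} (hstep : ∀ st a, P st → P (stkStep T st a))
    (q : List ℕ) {st : StackState} (h : P st) : P (stkRun T q st) := by
  induction q generalizing st with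
  | nil => exact h
  | cons a q ih => exact ih (hstep st a h)

lemma word_sublist_stkStep (st : StackState) (a : ℕ) : st.word <+ (stkStep T st a).word := by
  conv_lhs => rw [StackState.word, ← popPhase_snd_append_fst T a st.stack, ← List.append_assoc]
  exact (List.sublist_cons_self a _).append_left _

lemma mem_word_stkStep {st : StackState} {a z : ℕ} :
    z ∈ (stkStep T st a).word ↔ z = a ∨ z ∈ st.word := by
  have h := popPhase_snd_append_fst T a st.stack
  rw [StackState.word, StackState.word, ← h]
  simp only [stkStep, List.mem_append, List.mem_cons]
  tauto

lemma word_sublist_stkRun (q : List ℕ) (st : StackState) : st.word <+ (stkRun T q st).word :=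
  stkRun_induction (P := fun st' => st.word <+ st'.word)
    (fun st' a h => h.trans (word_sublist_stkStep st' a)) q (List.Sublist.refl _)

lemma out_prefix_stkRun (q : List ℕ) (st : StackState) : st.out <+: (stkRun T q st).out :=
  stkRun_induction (P := fun st' => st.out <+: st'.out)
    (fun _ _ h => h.trans (List.prefix_append _ _)) q (List.prefix_refl _)

lemma mem_word_of_mem_popPhase_fst {st : StackState} {a y : ℕ}
    (hy : y ∈ (popPhase T a st.stack).1) : y ∈ st.word := by
  rw [StackState.word, ← popPhase_snd_append_fst T a st.stack]
  simp [hy]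

lemma mem_word_stkRun {q : List ℕ} {z : ℕ} (hz : z ∈ q) (st : StackState) :
    z ∈ (stkRun T q st).word := by
  obtain ⟨q₁, q₂, rfl⟩ := List.append_of_mem hz
  rw [stkRun_append, stkRun_cons]
  refine (word_sublist_stkRun q₂ _).subset ?_
  simp [StackState.word, stkStep]

lemma pair_sublist_word_stkRun {q : List ℕ} {st : StackState} {b a : ℕ}
    (hb : b ∈ st.out) (ha : a ∈ q) : [b, a] <+ (stkRun T q st).word := by
  obtain ⟨q₁, q₂, rfl⟩ := List.append_of_mem ha
  rw [stkRun_append, stkRun_cons]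
  refine List.Sublist.trans ?_ (word_sublist_stkRun q₂ _)
  have hb' : b ∈ (stkStep T (stkRun T q₁ st) a).out :=
    List.mem_append_left _ ((out_prefix_stkRun q₁ st).subset hb)
  exact List.Sublist.append (List.singleton_sublist.2 hb') (by simp [stkStep])

def OutOrAboveSmaller (v : ℕ) (st : StackState) : Prop :=
  v ∈ st.out ∨ ∃ l₁ l₂, st.stack = l₁ ++ v :: l₂ ∧ ∃ z ∈ l₂, z < v

lemma outOrAboveSmaller_stkStep {v : ℕ} {st : StackState}
    (h : OutOrAboveSmaller v st) (a : ℕ) : OutOrAboveSmaller v (stkStep T st a) := by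
  rcases h with hv | ⟨l₁, l₂, hst, hz⟩
  · exact Or.inl (List.mem_append_left _ hv)
  have hsplit := (popPhase_snd_append_fst T a st.stack).trans hst
  simp only [OutOrAboveSmaller, stkStep]
  generalize popPhase T a st.stack = r at hsplit ⊢
  rcases List.append_eq_append_iff.1 hsplit with ⟨c, -, hc⟩ | ⟨c, hc, hc'⟩
  · exact Or.inr ⟨a :: c, l₂, by simp [hc], hz⟩
  · cases c with
    | nil => exact Or.inr ⟨[a], l₂, by simp [hc'], hz⟩
    | cons w c =>
      obtain ⟨rfl, -⟩ := List.cons_eq_cons.1 hc'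
      exact Or.inl (by simp [hc])

end StackMachine

def Anchored (st : StackState) : Prop :=
  ∃ s₁ m s₂, st.stack = s₁ ++ m :: s₂ ∧ (m :: s₂).Pairwise (· ≤ ·) ∧ ∀ z ∈ st.word, m ≤ z

lemma pairwise_le_of_containsAny_132_321_eq_false {a : ℕ} {s : List ℕ} (hlt : ∀ y ∈ s, a < y)
    (h : containsAny [[1,3,2],[3,2,1]] (a :: s) = false) : s.Pairwise (· ≤ ·) := by
  rw [List.pairwise_iff_forall_sublist]
  intro y z hyz
  by_contra hzy
  have : containsAny [[1,3,2],[3,2,1]] (a :: s) = true :=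
    containsAny_132_321_iff.2
      ⟨a, y, z, hyz.cons_cons a, Or.inl ⟨hlt z (hyz.subset (by simp)), by omega⟩⟩
  exact Bool.false_ne_true (h.symm.trans this)

lemma anchored_stkStep {st : StackState} (h : Anchored st) (a : ℕ) :
    Anchored (stkStep [[1,3,2],[3,2,1]] st a) := by
  obtain ⟨s₁, m, s₂, hst, hsort, hmin⟩ := h
  obtain ⟨t, ht⟩ :=
    exists_popPhase_fst_eq_append (a := a) (containsAny_132_321_cons_eq_false hsort) s₁
  rcases le_or_gt m a with hma | ham
  · refine ⟨a :: t, m, s₂, by simp [stkStep, hst, ht], hsort, fun z hz => ?_⟩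
    rcases mem_word_stkStep.1 hz with rfl | hz
    exacts [hma, hmin z hz]
  · have hr : ∀ y ∈ (popPhase [[1,3,2],[3,2,1]] a st.stack).1, a < y := fun y hy =>
      ham.trans_le (hmin y (mem_word_of_mem_popPhase_fst hy))
    refine ⟨[], a, _, rfl, List.pairwise_cons.2 ⟨fun y hy => (hr y hy).le, ?_⟩, fun z hz => ?_⟩
    · rcases popPhase_fst_eq_nil_or_not_containsAny [[1,3,2],[3,2,1]] a st.stack with h | h
      · rw [h]; exact List.Pairwise.nil
      · exact pairwise_le_of_containsAny_132_321_eq_false hr h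
    · rcases mem_word_stkStep.1 hz with rfl | hz
      exacts [le_rfl, (ham.trans_le (hmin z hz)).le]

lemma anchored_stkRun {q : List ℕ} (hq : q ≠ []) :
    Anchored (stkRun [[1,3,2],[3,2,1]] q ⟨[], []⟩) := by
  obtain ⟨a, q, rfl⟩ := List.exists_cons_of_ne_nil hq
  rw [stkRun_cons]
  exact stkRun_induction (P := Anchored) (fun st a h => anchored_stkStep h a) q
    ⟨[], a, [], rfl, List.pairwise_singleton _ _, by simp [stkStep, popPhase, StackState.word]⟩

lemma mem_out_stkStep_of_outOrAboveSmaller {v a : ℕ} {st : StackState}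
    (h : OutOrAboveSmaller v st) (hva : v < a) : v ∈ (stkStep [[1,3,2],[3,2,1]] st a).out := by
  rcases h with hv | ⟨l₁, l₂, hst, z, hz, hzv⟩
  · exact List.mem_append_left _ hv
  · refine List.mem_append_right _ (hst ▸ mem_popPhase_snd ?_ l₁)
    exact containsAny_132_321_iff.2
      ⟨a, v, z, by simp [List.singleton_sublist.2 hz], Or.inr ⟨hzv, hva⟩⟩

lemma Anchored.exists_min_mem_popPhase_fst {st : StackState} (h : Anchored st) (a : ℕ) :
    ∃ m, (∀ z ∈ st.word, m ≤ z) ∧ m ∈ (popPhase [[1,3,2],[3,2,1]] a st.stack).1 := by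
  obtain ⟨s₁, m, s₂, hst, hsort, hmin⟩ := h
  obtain ⟨t, ht⟩ :=
    exists_popPhase_fst_eq_append (a := a) (containsAny_132_321_cons_eq_false hsort) s₁
  exact ⟨m, hmin, by simp [hst, ht]⟩

lemma exists_231_sublist_sT_132_321 {x : List ℕ} {u v a : ℕ} (hx : [u, v, a] <+ x)
    (huv : u < v) (hva : v < a) :
    ∃ b c d, [b, c, d] <+ sT [[1,3,2],[3,2,1]] x ∧ d < b ∧ b < c := by
  obtain ⟨p, q, rfl, hu, ha⟩ := exists_split_of_triple_sublist hx
  obtain ⟨q₁, q₂, rfl⟩ := List.append_of_mem ha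
  set S₁ := stkRun [[1,3,2],[3,2,1]] p ⟨[], []⟩
  have hanch₁ : Anchored S₁ := anchored_stkRun (List.ne_nil_of_mem hu)
  obtain ⟨m, hmin, hm⟩ := hanch₁.exists_min_mem_popPhase_fst v
  have hmv : m < v := (hmin u (mem_word_stkRun hu _)).trans_lt huv
  set S₂ := stkStep [[1,3,2],[3,2,1]] S₁ v
  have hout₂ : OutOrAboveSmaller v S₂ := Or.inr ⟨[], _, rfl, m, hm, hmv⟩
  set S₃ := stkRun [[1,3,2],[3,2,1]] q₁ S₂
  have hout₃ : OutOrAboveSmaller v S₃ :=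
    stkRun_induction (P := OutOrAboveSmaller v) (fun _ b h => outOrAboveSmaller_stkStep h b) q₁ hout₂
  have hanch₃ : Anchored S₃ :=
    stkRun_induction (P := Anchored) (fun _ b h => anchored_stkStep h b) q₁ (anchored_stkStep hanch₁ v)
  obtain ⟨m', hmin', hm'⟩ := hanch₃.exists_min_mem_popPhase_fst a
  have hmS₃ : m ∈ S₃.word :=
    (word_sublist_stkRun q₁ S₂).subset (by simp [StackState.word, S₂, stkStep, hm])
  have hm'v : m' < v := (hmin' m hmS₃).trans_lt hmv
  have hS₄ : [v, a, m'] <+ (stkStep [[1,3,2],[3,2,1]] S₃ a).word :=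
    (List.singleton_sublist.2 (mem_out_stkStep_of_outOrAboveSmaller hout₃ hva)).append
      (by simp [stkStep, hm'])
  refine ⟨v, a, m', ?_, hm'v, hva⟩
  rw [sT_eq_word_stkRun, stkRun_append, stkRun_cons, stkRun_append, stkRun_cons]
  exact hS₄.trans (word_sublist_stkRun q₂ _)

lemma pair_sublist_westSort {y : List ℕ} {b c d : ℕ} (hy : [b, c, d] <+ y) (hbc : b < c) :
    [b, d] <+ westSort y := by
  obtain ⟨p, q, rfl, hb, hd⟩ := exists_split_of_triple_sublist hy
  set S₁ := stkRun [[2,1]] p ⟨[], []⟩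
  have hb' : b ∈ (stkStep [[2,1]] S₁ c).out := by
    rcases List.mem_append.1 (mem_word_stkRun hb ⟨[], []⟩) with hb | hb
    · exact List.mem_append_left _ hb
    · obtain ⟨l₁, l₂, hst⟩ := List.append_of_mem hb
      refine List.mem_append_right _ (hst ▸ mem_popPhase_snd ?_ l₁)
      simp only [containsAny, List.any_cons, List.any_nil, Bool.or_false, containsPat_iff]
      exact ⟨[c, b], by simp, isoOrd_21_iff.2 hbc⟩
  rw [westSort, sT_eq_word_stkRun, stkRun_append, stkRun_cons]
  exact pair_sublist_word_stkRun hb' hd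

theorem sortable_avoids_123_general (n : ℕ) (x : List ℕ)
    (hs : westSort (sT [[1,3,2],[3,2,1]] x) = idPerm n) :
    containsPat [1,2,3] x = false := by
  rw [Bool.eq_false_iff, ne_eq, containsPat_three_iff rfl]
  rintro ⟨u, v, a, hx, h123⟩
  obtain ⟨huv, hva⟩ := isoOrd_123_iff.1 h123
  obtain ⟨b, c, d, h231, hdb, hbc⟩ := exists_231_sublist_sT_132_321 hx huv hva
  have hinv := pair_sublist_westSort h231 hbc
  rw [hs] at hinv
  have hsorted : (idPerm n).Pairwise (· < ·) := List.pairwise_lt_range'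
  exact lt_asymm hdb (List.pairwise_pair.1 (hsorted.sublist hinv))

/-- A `(132,321)`-sortable permutation avoids `123`. -/
theorem sortable_avoids_123 (n : ℕ) (x : List ℕ) (hx : IsPermList n x)
    (hs : westSort (sT [[1,3,2],[3,2,1]] x) = idPerm n) :
    containsPat [1,2,3] x = false :=
  sortable_avoids_123_general n x hs
end

section
/- If x avoids both 123 and the bivincular pattern 132*, then the permutation obtained from x by deleting its maximum entry n also avoids 123 and 132*. -/
/-!
Deleting an entry only passes to a subsequence, so `123`-avoidance survives. An occurrence of
`132*` in `x.erase n` at positions `i < j` is also one in `x`, unless `n` sat exactly between the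
adjacent entries `x j` and `x j - 1`; but then `x i < x j < n` is a `123` in `x`.
-/

lemma containsPat_of_sublist {p w w' : List ℕ} (h : w'.Sublist w)
    (hc : containsPat p w' = true) : containsPat p w = true := by
  simp only [containsPat, List.any_eq_true, List.mem_sublistsLen] at *
  obtain ⟨l, ⟨hlw', hlen⟩, hiso⟩ := hc
  exact ⟨l, ⟨hlw'.trans h, hlen⟩, hiso⟩

lemma isoOrd_123 {a b c : ℕ} (hab : a < b) (hbc : b < c) : isoOrd [1,2,3] [a,b,c] = true := by
  simp [isoOrd, List.range_succ, hab, hbc, hab.trans hbc, hab.not_gt, hbc.not_gt,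
    (hab.trans hbc).not_gt]

lemma getD_sublist_of_lt {x : List ℕ} {i j k : ℕ} (hij : i < j) (hjk : j < k)
    (hk : k < x.length) : [x.getD i 0, x.getD j 0, x.getD k 0].Sublist x := by
  have hi : i < x.length := by omega
  have hj : j < x.length := by omega
  rw [List.getD_eq_getElem _ _ hi, List.getD_eq_getElem _ _ hj, List.getD_eq_getElem _ _ hk]
  have hsorted : [(⟨i, hi⟩ : Fin x.length), ⟨j, hj⟩, ⟨k, hk⟩].Pairwise (· < ·) := by
    simp only [List.pairwise_cons, List.mem_cons, List.not_mem_nil, or_false, forall_eq_or_imp,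
      Fin.mk_lt_mk, forall_eq, IsEmpty.forall_iff, implies_true, List.Pairwise.nil, and_true]
    omega
  simpa using List.map_getElem_sublist hsorted

lemma containsPat_123_of_getD_lt {x : List ℕ} {i j k : ℕ} (hij : i < j) (hjk : j < k)
    (hk : k < x.length) (h₁ : x.getD i 0 < x.getD j 0) (h₂ : x.getD j 0 < x.getD k 0) :
    containsPat [1,2,3] x = true :=
  containsPat_of_sublist (getD_sublist_of_lt hij hjk hk) <| by
    simp only [containsPat, List.any_eq_true]
    exact ⟨_, List.mem_sublistsLen.2 ⟨List.Sublist.refl _, rfl⟩, isoOrd_123 h₁ h₂⟩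

lemma getD_append_eq_getD_append_cons {α : Type*} (A B : List α) (a d : α) (k : ℕ) :
    (A ++ B).getD k d = (A ++ a :: B).getD (if k < A.length then k else k + 1) d := by
  split_ifs with hk
  · rw [List.getD_append _ _ _ _ hk, List.getD_append _ _ _ _ hk]
  · rw [List.getD_append_right _ _ _ _ (by omega), List.getD_append_right _ _ _ _ (by omega),
      show k + 1 - A.length = k - A.length + 1 by omega, List.getD_cons_succ]

lemma Has132Star.append_cons {A B : List ℕ} {a : ℕ} (hA : ∀ y ∈ A, y < a)
    (h123 : containsPat [1,2,3] (A ++ a :: B) = false) (h : Has132Star (A ++ B)) :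
    Has132Star (A ++ a :: B) := by
  obtain ⟨i, j, hij, hj, hlt, heq⟩ := h
  simp only [getD_append_eq_getD_append_cons A B a] at hlt heq
  simp only [List.length_append] at hj
  by_cases hjA : j + 1 = A.length
  · have hiA : i < A.length := by omega
    have hjA' : j < A.length := by omega
    have hj1A : ¬ j + 1 < A.length := by omega
    simp only [hiA, hjA', hj1A, if_true, if_false] at hlt heq
    have hja : (A ++ a :: B).getD j 0 < a := by
      rw [List.getD_append _ _ _ _ hjA', List.getD_eq_getElem _ _ hjA']
      exact hA _ (List.getElem_mem hjA')
    have hxa : (A ++ a :: B).getD (j + 1) 0 = a := by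
      rw [List.getD_append_right _ _ _ _ hjA.ge, hjA, Nat.sub_self, List.getD_cons_zero]
    exact absurd (containsPat_123_of_getD_lt (x := A ++ a :: B) hij (Nat.lt_succ_self j)
      (by simp only [List.length_append, List.length_cons]; omega) (by omega) (by rwa [hxa]))
      (by simp [h123])
  · have hshift : (if j + 1 < A.length then j + 1 else j + 1 + 1) =
        (if j < A.length then j else j + 1) + 1 := by
      split_ifs <;> omega
    rw [hshift] at hlt heq
    refine ⟨if i < A.length then i else i + 1, if j < A.length then j else j + 1,
      by split_ifs <;> omega, ?_, hlt, heq⟩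
    simp only [List.length_append, List.length_cons]
    split_ifs <;> omega

/-- Deleting the maximum entry preserves avoidance of `123` and `132*`. -/
theorem erase_max_avoids (n : ℕ) (x : List ℕ) (hx : IsPermList n x)
    (h123 : containsPat [1,2,3] x = false) (hstar : ¬ Has132Star x) :
    containsPat [1,2,3] (x.erase n) = false ∧ ¬ Has132Star (x.erase n) := by
  refine ⟨Bool.eq_false_iff.2 fun h => ?_, fun hstar' => hstar ?_⟩
  · simpa [h123] using containsPat_of_sublist x.erase_sublist h
  by_cases hn : n ∈ x
  · obtain ⟨A, B, hnA, rfl, hErase⟩ := List.exists_erase_eq hn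
    rw [hErase] at hstar'
    refine Has132Star.append_cons (fun y hy => ?_) h123 hstar'
    have hy_range : y ∈ List.range' 1 n := hx.subset (List.mem_append_left _ hy)
    have hy_ne : y ≠ n := ne_of_mem_of_not_mem hy hnA
    rw [List.mem_range'] at hy_range
    omega
  · rwa [List.erase_of_not_mem hn] at hstar'
end

section
/- If x ∈ S_n avoids 123 and x_1 ≠ n, then the set of active sites of x with respect to 123 is exactly {1, 2, ..., ind_x(n)}, where ind_x(n) is the position of n in x. -/
section

open List

theorem List.insertIdx_eq_take_append_cons_drop {α : Type*} (l : List α) (a : α) {k : ℕ}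
    (hk : k ≤ l.length) : l.insertIdx k a = l.take k ++ a :: l.drop k := by
  induction l generalizing k with
  | nil => simp_all
  | cons hd tl ih =>
    cases k with
    | zero => simp
    | succ k => simp_all [insertIdx_succ_cons]

theorem containsPat_iff_exists_sublist (p w : List ℕ) :
    containsPat p w = true ↔ ∃ l, l <+ w ∧ l.length = p.length ∧ isoOrd p l = true := by
  simp [containsPat, mem_sublistsLen, and_assoc]

theorem containsPat_12_iff (w : List ℕ) :
    containsPat [1,2] w = true ↔ ∃ a b, a < b ∧ [a, b] <+ w := by
  rw [containsPat_iff_exists_sublist]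
  constructor
  · rintro ⟨l, hs, hl, hiso⟩
    match l, hl with
    | [a, b], _ => exact ⟨a, b, by simp [isoOrd, range_succ] at hiso; omega, hs⟩
  · rintro ⟨a, b, hab, hs⟩
    exact ⟨[a, b], hs, rfl, by simp [isoOrd, range_succ]; omega⟩

theorem containsPat_123_iff (w : List ℕ) :
    containsPat [1,2,3] w = true ↔ ∃ a b c, a < b ∧ b < c ∧ [a, b, c] <+ w := by
  rw [containsPat_iff_exists_sublist]
  constructor
  · rintro ⟨l, hs, hl, hiso⟩
    match l, hl with
    | [a, b, c], _ =>
      have habc : a < b ∧ b < c := by simp [isoOrd, range_succ] at hiso; omega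
      exact ⟨a, b, c, habc.1, habc.2, hs⟩
  · rintro ⟨a, b, c, hab, hbc, hs⟩
    exact ⟨[a, b, c], hs, rfl, by simp [isoOrd, range_succ]; omega⟩

theorem containsPat_123_insertIdx_iff {w : List ℕ} {M p : ℕ} (hM : ∀ m ∈ w, m < M)
    (hp : p ≤ w.length) :
    containsPat [1,2,3] (w.insertIdx p M) = true ↔
      containsPat [1,2,3] w = true ∨ containsPat [1,2] (w.take p) = true := by
  rw [containsPat_123_iff, containsPat_123_iff, containsPat_12_iff,
    insertIdx_eq_take_append_cons_drop w M hp]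
  constructor
  · rintro ⟨a, b, c, hab, hbc, hs⟩
    obtain ⟨l₁, l₂, hl, h₁, h₂⟩ := sublist_append_iff.1 hs
    rcases sublist_cons_iff.1 h₂ with h₂ | ⟨r, rfl, hr₂⟩
    · exact Or.inl ⟨a, b, c, hab, hbc, take_append_drop p w ▸ hl ▸ h₁.append h₂⟩
    · have hr : ∀ m ∈ r, m < M := fun m hm => hM m ((hr₂.trans (drop_sublist p w)).subset hm)
      match l₁, hl with
      | [], hl =>
        simp only [nil_append, cons.injEq] at hl
        have := hr b (by simp [← hl.2])
        omega
      | [_], hl =>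
        simp only [cons_append, nil_append, cons.injEq] at hl
        have := hr c (by simp [← hl.2.2])
        omega
      | [_, _], hl =>
        simp only [cons_append, nil_append, cons.injEq] at hl
        obtain ⟨rfl, rfl, -⟩ := hl
        exact Or.inr ⟨a, b, hab, h₁⟩
      | _ :: _ :: _ :: _, hl => simpa using congrArg length hl
  · rintro (⟨a, b, c, hab, hbc, hs⟩ | ⟨a, b, hab, hs⟩)
    · refine ⟨a, b, c, hab, hbc, hs.trans ?_⟩
      rw [← insertIdx_eq_take_append_cons_drop w M hp]
      exact sublist_insertIdx w p M
    · exact ⟨a, b, M, hab, hM b ((hs.trans (take_sublist p w)).subset (by simp)),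
        hs.append (singleton_sublist.2 mem_cons_self)⟩

theorem containsPat_12_take_of_idxOf_lt {x : List ℕ} {n p : ℕ} (hmax : ∀ m ∈ x, m ≤ n)
    (hn : n ∈ x) (hfirst : x.getD 0 0 ≠ n) (hp : x.idxOf n < p) :
    containsPat [1,2] (x.take p) = true := by
  cases x with
  | nil => simp at hn
  | cons a t =>
    obtain ⟨q, rfl⟩ : ∃ q, p = q + 1 := ⟨p - 1, by omega⟩
    have ha : a ≠ n := hfirst
    have hnt : n ∈ t := (mem_cons.1 hn).resolve_left ha.symm
    rw [idxOf_cons_ne t ha] at hp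
    rw [containsPat_12_iff, take_succ_cons]
    exact ⟨a, n, lt_of_le_of_ne (hmax a mem_cons_self) ha,
      (singleton_sublist.2 ((mem_take_iff_idxOf_lt hnt).2 (by omega))).cons_cons a⟩

theorem containsPat_12_take_eq_false {x : List ℕ} {n p : ℕ} (hmax : ∀ m ∈ x, m ≤ n)
    (hn : n ∈ x) (h123 : containsPat [1,2,3] x = false) (hp : p ≤ x.idxOf n) :
    containsPat [1,2] (x.take p) = false := by
  rw [Bool.eq_false_iff, ne_eq, containsPat_12_iff]
  rintro ⟨a, b, hab, hs⟩
  have hsk : [a, b] <+ x.take (x.idxOf n) := hs.trans (take_sublist_take_left hp)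
  have hb : b ∈ x.take (x.idxOf n) := hsk.subset (by simp)
  have hbn : b < n := by
    refine lt_of_le_of_ne (hmax b (mem_of_mem_take hb)) ?_
    rintro rfl
    exact (lt_irrefl _) ((mem_take_iff_idxOf_lt hn).1 hb)
  have hnd : [n] <+ x.drop (x.idxOf n) := by
    rw [drop_eq_getElem_cons (idxOf_lt_length_iff.2 hn), getElem_idxOf]
    exact singleton_sublist.2 mem_cons_self
  have h123' := (containsPat_123_iff x).2
    ⟨a, b, n, hab, hbn, take_append_drop _ x ▸ hsk.append hnd⟩
  simp [h123] at h123'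

end

theorem IsPermList.le_of_mem {n m : ℕ} {x : List ℕ} (hx : IsPermList n x) (hm : m ∈ x) :
    m ≤ n := by
  have := hx.mem_iff.1 hm
  simp only [List.mem_range'_1] at this
  omega

theorem IsPermList.mem_self {n : ℕ} {x : List ℕ} (hx : IsPermList n x) (hn : 0 < n) : n ∈ x :=
  hx.mem_iff.2 (List.mem_range'_1.2 ⟨hn, by omega⟩)

theorem active_sites_initial_interval_general (n : ℕ) (x : List ℕ) (hx : IsPermList n x)
    (h123 : containsPat [1,2,3] x = false) (hfirst : x.getD 0 0 ≠ n) :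
    ∀ j, 1 ≤ j → j ≤ n + 1 →
      (containsPat [1,2,3] (x.insertIdx (j-1) (n+1)) = false ↔ j ≤ x.idxOf n + 1) := by
  intro j hj1 hj2
  have hlen : x.length = n := by simpa using hx.length_eq
  have hmax : ∀ m ∈ x, m ≤ n := fun _ => hx.le_of_mem
  have hn : n ∈ x := hx.mem_self <| Nat.pos_of_ne_zero fun h0 => hfirst <| by
    rw [List.eq_nil_of_length_eq_zero (hlen.trans h0), h0]; rfl
  rw [Bool.eq_false_iff, ne_eq, containsPat_123_insertIdx_iff
    (fun m hm => Nat.lt_succ_of_le (hmax m hm)) (by omega), h123]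
  rcases le_or_gt (j - 1) (x.idxOf n) with hp | hp
  · simp only [containsPat_12_take_eq_false hmax hn h123 hp, Bool.false_eq_true, or_self,
      not_false_eq_true, true_iff]
    omega
  · simp only [containsPat_12_take_of_idxOf_lt hmax hn hfirst hp, or_true, not_true_eq_false,
      false_iff, not_le]
    omega

/-- If `x ∈ Av_n(123)` and `x₁ ≠ n`, then the active sites of `x` with respect to `123`
are exactly `{1, …, ind_x(n)}` (sites and `ind` 1-based). -/
theorem active_sites_initial_interval (n : ℕ) (x : List ℕ) (hx : IsPermList n x)
    (hn : 1 ≤ n) (h123 : containsPat [1,2,3] x = false) (hfirst : x.getD 0 0 ≠ n) :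
    ∀ j, 1 ≤ j → j ≤ n + 1 →
      (containsPat [1,2,3] (x.insertIdx (j-1) (n+1)) = false ↔ j ≤ x.idxOf n + 1) :=
  active_sites_initial_interval_general n x hx h123 hfirst
end
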